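/- Let n ≥ 2 be an integer, let ν be a Lévy measure on ℝ with ∫ |y|^n ν(dy) < ∞ off every neighbourhood of 0 and ∫ |y|^n ν(dy) defined (possibly after restriction, all weighted integrals below finite), and let Λ > 0, ε > 0 and ξ ∈ [0,1] satisfy ν({|y| > ε}) + ξ ν({|y| = ε}) = Λ. Define ν_ε(dy) = ν(dy) 1_{{|y| > ε}} + ξ ν(dy) 1_{{|y| = ε}}. Then ν_ε minimizes J(ν̂) := ∫ |y|^n |ν − ν̂|(dy) over all finite positive measures ν̂ with ν̂(ℝ) = Λ, and the minimal value equals J(ν_ε) = ∫_{{|y| < ε}} |y|^n ν(dy) + (1−ξ) ∫_{{|y| = ε}} |y|^n ν(dy). -/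

import Mathlib

open MeasureTheory Filter Set
open scoped ENNReal

/-- The total variation measure `|μ - ν| = (μ - μ⊓ν) + (ν - μ⊓ν)` of the difference of two
positive measures. -/
noncomputable def tvDist (μ ν : Measure ℝ) : Measure ℝ := (μ - μ ⊓ ν) + (ν - μ ⊓ ν)

/-- The functional `J(ν̂) = ∫ |y|^n |ν - ν̂|(dy)`. -/
noncomputable def Jfun (n : ℕ) (ν νb : Measure ℝ) : ℝ≥0∞ :=
  ∫⁻ y, ENNReal.ofReal (|y| ^ n) ∂(tvDist ν νb)

/-!
A candidate `ν̂` only matters through `m = ν ⊓ ν̂`: `J(ν̂) ≥ ∫ w d(ν - m) = ∫ w dν - ∫ w dm`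
with `w(y) = |y|^n`, and `m ≤ ν` has mass at most `Λ`. This is a bathtub problem: among
measures `m ≤ ν` of mass at most `Λ`, `∫ w dm` is maximised by filling up the region where `w`
is largest, i.e. by `ν_ε`. Precisely, with `c = ε^n`, every `m ≤ ν` satisfies
`∫ w dm ≤ ∫_{|y|>ε} (w - c) dν + c · m(ℝ)`, with equality for `m = ν_ε`.
-/

section Bathtub

variable {α : Type*} [MeasurableSpace α] {ν μ : Measure α} {w : α → ℝ≥0∞} {c s : ℝ≥0∞}
  {A B : Set α}

theorem setLIntegral_eq_setLIntegral_tsub_add_mul (hA : MeasurableSet A)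
    (hcA : ∀ x ∈ A, c ≤ w x) :
    ∫⁻ x in A, w x ∂μ = ∫⁻ x in A, (w x - c) ∂μ + c * μ A := by
  calc ∫⁻ x in A, w x ∂μ = ∫⁻ x in A, (w x - c + c) ∂μ :=
        setLIntegral_congr_fun hA fun x hx => (tsub_add_cancel_of_le (hcA x hx)).symm
    _ = ∫⁻ x in A, (w x - c) ∂μ + c * μ A := by
        rw [lintegral_add_right _ measurable_const, setLIntegral_const]

theorem lintegral_le_setLIntegral_tsub_add_mul (hA : MeasurableSet A)
    (hcA : ∀ x ∈ A, c ≤ w x) (hAc : ∀ x ∉ A, w x ≤ c) (hμ : μ ≤ ν) :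
    ∫⁻ x, w x ∂μ ≤ ∫⁻ x in A, (w x - c) ∂ν + c * μ univ := by
  have hAc_int : ∫⁻ x in Aᶜ, w x ∂μ ≤ c * μ Aᶜ := by
    rw [← setLIntegral_const]
    exact setLIntegral_mono measurable_const fun x hx => hAc x hx
  calc ∫⁻ x, w x ∂μ = ∫⁻ x in A, w x ∂μ + ∫⁻ x in Aᶜ, w x ∂μ := (lintegral_add_compl _ hA).symm
    _ ≤ ∫⁻ x in A, (w x - c) ∂μ + c * μ A + c * μ Aᶜ := by
        rw [setLIntegral_eq_setLIntegral_tsub_add_mul hA hcA]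
        gcongr
    _ = ∫⁻ x in A, (w x - c) ∂μ + c * μ univ := by
        rw [add_assoc, ← mul_add, measure_add_measure_compl hA]
    _ ≤ ∫⁻ x in A, (w x - c) ∂ν + c * μ univ := by
        gcongr

theorem lintegral_restrict_add_smul_restrict (hA : MeasurableSet A) (hB : MeasurableSet B)
    (hcA : ∀ x ∈ A, c ≤ w x) (hwB : ∀ x ∈ B, w x = c) :
    ∫⁻ x, w x ∂(ν.restrict A + s • ν.restrict B) =
      ∫⁻ x in A, (w x - c) ∂ν + c * (ν A + s * ν B) := by
  have hB_int : ∫⁻ x in B, w x ∂ν = c * ν B := by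
    rw [setLIntegral_congr_fun hB hwB, setLIntegral_const]
  rw [lintegral_add_measure, lintegral_smul_measure, hB_int,
    setLIntegral_eq_setLIntegral_tsub_add_mul hA hcA, smul_eq_mul]
  ring

/-- The bathtub principle. -/
theorem lintegral_le_lintegral_restrict_add_smul_restrict (hA : MeasurableSet A)
    (hB : MeasurableSet B) (hcA : ∀ x ∈ A, c ≤ w x) (hAc : ∀ x ∉ A, w x ≤ c)
    (hwB : ∀ x ∈ B, w x = c) (hμ : μ ≤ ν) (hmass : μ univ ≤ ν A + s * ν B) :
    ∫⁻ x, w x ∂μ ≤ ∫⁻ x, w x ∂(ν.restrict A + s • ν.restrict B) := by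
  rw [lintegral_restrict_add_smul_restrict hA hB hcA hwB]
  calc ∫⁻ x, w x ∂μ ≤ ∫⁻ x in A, (w x - c) ∂ν + c * μ univ :=
        lintegral_le_setLIntegral_tsub_add_mul hA hcA hAc hμ
    _ ≤ ∫⁻ x in A, (w x - c) ∂ν + c * (ν A + s * ν B) := by gcongr

end Bathtub

theorem lintegral_sub_measure_le_of_lintegral_le {α : Type*} [MeasurableSpace α]
    {ν μ ρ : Measure α} [IsFiniteMeasure μ] [IsFiniteMeasure ρ] {f : α → ℝ≥0∞}
    (hμ : μ ≤ ν) (hρ : ρ ≤ ν) (hρ_fin : ∫⁻ x, f x ∂ρ ≠ ∞)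
    (hle : ∫⁻ x, f x ∂μ ≤ ∫⁻ x, f x ∂ρ) :
    ∫⁻ x, f x ∂(ν - ρ) ≤ ∫⁻ x, f x ∂(ν - μ) := by
  refine ENNReal.le_of_add_le_add_right hρ_fin ?_
  calc ∫⁻ x, f x ∂(ν - ρ) + ∫⁻ x, f x ∂ρ = ∫⁻ x, f x ∂(ν - μ) + ∫⁻ x, f x ∂μ := by
        rw [← lintegral_add_measure, ← lintegral_add_measure, Measure.sub_add_cancel_of_le hρ,
          Measure.sub_add_cancel_of_le hμ]
    _ ≤ ∫⁻ x, f x ∂(ν - μ) + ∫⁻ x, f x ∂ρ := by gcongr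

theorem tvDist_of_le {ν νb : Measure ℝ} (h : νb ≤ ν) : tvDist ν νb = ν - νb := by
  rw [tvDist, inf_eq_right.mpr h, Measure.sub_self, add_zero]

theorem Jfun_of_le {n : ℕ} {ν νb : Measure ℝ} (h : νb ≤ ν) :
    Jfun n ν νb = ∫⁻ y, ENNReal.ofReal (|y| ^ n) ∂(ν - νb) := by
  rw [Jfun, tvDist_of_le h]

theorem lintegral_sub_inf_le_Jfun (n : ℕ) (ν νb : Measure ℝ) :
    ∫⁻ y, ENNReal.ofReal (|y| ^ n) ∂(ν - ν ⊓ νb) ≤ Jfun n ν νb := by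
  rw [Jfun, tvDist, lintegral_add_measure]
  exact le_self_add

section Truncation

/-- The paper's `ν_ε`. -/
noncomputable def truncateAt (ν : Measure ℝ) (ε ξ : ℝ) : Measure ℝ :=
  ν.restrict {y | ε < |y|} + ENNReal.ofReal ξ • ν.restrict {y | |y| = ε}

variable {ν : Measure ℝ} {ε ξ : ℝ}

theorem measurableSet_lt_abs (ε : ℝ) : MeasurableSet {y : ℝ | ε < |y|} :=
  measurableSet_lt measurable_const measurable_abs

theorem measurableSet_abs_eq (ε : ℝ) : MeasurableSet {y : ℝ | |y| = ε} :=
  measurable_abs (measurableSet_singleton ε)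

theorem truncateAt_univ :
    truncateAt ν ε ξ univ = ν {y | ε < |y|} + ENNReal.ofReal ξ * ν {y | |y| = ε} := by
  simp [truncateAt]

theorem truncateAt_le (hξ1 : ξ ≤ 1) : truncateAt ν ε ξ ≤ ν := by
  have hdisj : Disjoint {y : ℝ | ε < |y|} {y | |y| = ε} :=
    disjoint_left.mpr fun y hlt heq => hlt.ne' heq
  calc truncateAt ν ε ξ ≤ ν.restrict {y | ε < |y|} + (1 : ℝ≥0∞) • ν.restrict {y | |y| = ε} := by
        unfold truncateAt
        gcongr
        exact ENNReal.ofReal_le_one.mpr hξ1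
    _ = ν.restrict ({y | ε < |y|} ∪ {y | |y| = ε}) := by
        rw [one_smul, Measure.restrict_union hdisj (measurableSet_abs_eq ε)]
    _ ≤ ν := Measure.restrict_le_self

theorem sub_truncateAt [IsFiniteMeasure (truncateAt ν ε ξ)] (hξ0 : 0 ≤ ξ) (hξ1 : ξ ≤ 1) :
    ν - truncateAt ν ε ξ =
      ν.restrict {y | |y| < ε} + ENNReal.ofReal (1 - ξ) • ν.restrict {y | |y| = ε} := by
  have hdisj : Disjoint {y : ℝ | |y| < ε} {y | |y| = ε} :=
    disjoint_left.mpr fun y hlt heq => hlt.ne heq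
  have hcompl : {y : ℝ | ε < |y|}ᶜ = {y | |y| < ε} ∪ {y | |y| = ε} := by
    ext y
    simp [le_iff_lt_or_eq]
  have hsplit : ν.restrict {y | |y| = ε} =
      ENNReal.ofReal (1 - ξ) • ν.restrict {y | |y| = ε} +
        ENNReal.ofReal ξ • ν.restrict {y | |y| = ε} := by
    rw [← add_smul, ← ENNReal.ofReal_add (by linarith) hξ0, sub_add_cancel, ENNReal.ofReal_one,
      one_smul]
  have hdecomp : ν.restrict {y | |y| < ε} + ENNReal.ofReal (1 - ξ) • ν.restrict {y | |y| = ε} +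
      truncateAt ν ε ξ = ν := by
    calc _ = ν.restrict {y | |y| < ε} + (ENNReal.ofReal (1 - ξ) • ν.restrict {y | |y| = ε} +
          ENNReal.ofReal ξ • ν.restrict {y | |y| = ε}) + ν.restrict {y | ε < |y|} := by
          rw [truncateAt]
          ac_rfl
      _ = ν.restrict {y | ε < |y|}ᶜ + ν.restrict {y | ε < |y|} := by
          rw [← hsplit, hcompl, Measure.restrict_union hdisj (measurableSet_abs_eq ε)]
      _ = ν := by rw [add_comm, Measure.restrict_add_restrict_compl (measurableSet_lt_abs ε)]
  nth_rewrite 1 [← hdecomp]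
  exact Measure.add_sub_cancel

theorem lintegral_le_lintegral_truncateAt (n : ℕ) (hε : 0 ≤ ε) {μ : Measure ℝ} (hμ : μ ≤ ν)
    (hmass : μ univ ≤ truncateAt ν ε ξ univ) :
    ∫⁻ y, ENNReal.ofReal (|y| ^ n) ∂μ ≤ ∫⁻ y, ENNReal.ofReal (|y| ^ n) ∂(truncateAt ν ε ξ) := by
  rw [truncateAt_univ] at hmass
  refine lintegral_le_lintegral_restrict_add_smul_restrict (c := ENNReal.ofReal (ε ^ n))
    (measurableSet_lt_abs ε) (measurableSet_abs_eq ε) (fun y hy => ?_) (fun y hy => ?_)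
    (fun y hy => ?_) hμ hmass
  · exact ENNReal.ofReal_le_ofReal (pow_le_pow_left₀ hε (le_of_lt hy) n)
  · exact ENNReal.ofReal_le_ofReal (pow_le_pow_left₀ (abs_nonneg y) (not_lt.mp hy) n)
  · rw [show |y| = ε from hy]

end Truncation

theorem stmt_7_general (n : ℕ) (ν : Measure ℝ)
    (hνn : (∫⁻ y, ENNReal.ofReal (|y| ^ n) ∂ν) < ⊤)
    (Λ ε ξ : ℝ) (hε : 0 < ε) (hξ0 : 0 ≤ ξ) (hξ1 : ξ ≤ 1)
    (hmass : ν {y : ℝ | ε < |y|} + ENNReal.ofReal ξ * ν {y : ℝ | |y| = ε} = ENNReal.ofReal Λ) :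
    (Jfun n ν (ν.restrict {y : ℝ | ε < |y|}
        + ENNReal.ofReal ξ • ν.restrict {y : ℝ | |y| = ε}) =
      (∫⁻ y in {y : ℝ | |y| < ε}, ENNReal.ofReal (|y| ^ n) ∂ν) +
        ENNReal.ofReal (1 - ξ) * ∫⁻ y in {y : ℝ | |y| = ε}, ENNReal.ofReal (|y| ^ n) ∂ν) ∧
    ∀ νhat : Measure ℝ, IsFiniteMeasure νhat → νhat Set.univ = ENNReal.ofReal Λ →
      Jfun n ν (ν.restrict {y : ℝ | ε < |y|}
          + ENNReal.ofReal ξ • ν.restrict {y : ℝ | |y| = ε}) ≤ Jfun n ν νhat := by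
  rw [← truncateAt.eq_1]
  have hmass' : truncateAt ν ε ξ univ = ENNReal.ofReal Λ := truncateAt_univ.trans hmass
  have : IsFiniteMeasure (truncateAt ν ε ξ) := ⟨hmass' ▸ ENNReal.ofReal_lt_top⟩
  rw [Jfun_of_le (truncateAt_le hξ1)]
  refine ⟨?_, fun νhat _ hνhat => ?_⟩
  · rw [sub_truncateAt hξ0 hξ1, lintegral_add_measure, lintegral_smul_measure, smul_eq_mul]
  · have hm : (ν ⊓ νhat) univ ≤ truncateAt ν ε ξ univ :=
      hmass' ▸ hνhat ▸ Measure.le_iff'.mp inf_le_right univ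
    have : IsFiniteMeasure (ν ⊓ νhat) := ⟨hm.trans_lt (measure_lt_top _ _)⟩
    have hfin : ∫⁻ y, ENNReal.ofReal (|y| ^ n) ∂(truncateAt ν ε ξ) ≠ ∞ :=
      ((lintegral_mono' (truncateAt_le hξ1) le_rfl).trans_lt hνn).ne
    calc ∫⁻ y, ENNReal.ofReal (|y| ^ n) ∂(ν - truncateAt ν ε ξ)
        ≤ ∫⁻ y, ENNReal.ofReal (|y| ^ n) ∂(ν - ν ⊓ νhat) :=
          lintegral_sub_measure_le_of_lintegral_le inf_le_left (truncateAt_le hξ1) hfin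
            (lintegral_le_lintegral_truncateAt n hε.le inf_le_left hm)
      _ ≤ Jfun n ν νhat := lintegral_sub_inf_le_Jfun n ν νhat

/-- The truncation `ν_ε(dy) = ν(dy) 1_{|y|>ε} + ξ ν(dy) 1_{|y|=ε}` minimizes
`J(ν̂) = ∫ |y|^n |ν - ν̂|(dy)` over all finite positive measures `ν̂` of total mass `Λ`, and
the minimal value is `∫_{|y|<ε} |y|^n ν(dy) + (1-ξ) ∫_{|y|=ε} |y|^n ν(dy)`. -/
theorem stmt_7 (n : ℕ) (hn : 2 ≤ n) (ν : Measure ℝ)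
    (hν0 : ν {0} = 0)
    (hν2 : (∫⁻ y, ENNReal.ofReal (min 1 (y ^ 2)) ∂ν) < ⊤)
    (hνn : (∫⁻ y, ENNReal.ofReal (|y| ^ n) ∂ν) < ⊤)
    (Λ ε ξ : ℝ) (hΛ : 0 < Λ) (hε : 0 < ε) (hξ0 : 0 ≤ ξ) (hξ1 : ξ ≤ 1)
    (hmass : ν {y : ℝ | ε < |y|} + ENNReal.ofReal ξ * ν {y : ℝ | |y| = ε} = ENNReal.ofReal Λ) :
    (Jfun n ν (ν.restrict {y : ℝ | ε < |y|}
        + ENNReal.ofReal ξ • ν.restrict {y : ℝ | |y| = ε}) =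
      (∫⁻ y in {y : ℝ | |y| < ε}, ENNReal.ofReal (|y| ^ n) ∂ν) +
        ENNReal.ofReal (1 - ξ) * ∫⁻ y in {y : ℝ | |y| = ε}, ENNReal.ofReal (|y| ^ n) ∂ν) ∧
    ∀ νhat : Measure ℝ, IsFiniteMeasure νhat → νhat Set.univ = ENNReal.ofReal Λ →
      Jfun n ν (ν.restrict {y : ℝ | ε < |y|}
          + ENNReal.ofReal ξ • ν.restrict {y : ℝ | |y| = ε}) ≤ Jfun n ν νhat :=
  stmt_7_general n ν hνn Λ ε ξ hε hξ0 hξ1 hmass
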